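/- arXiv:1312.5567 — 2 statements merged into one kernel-verified Lean document; each statement's English description precedes it below -/
import Mathlib

section
/- For 1 ≤ p < ∞ and a measurable function f on (0,∞), the operator T f(r) := -∫_r^∞ f(s)/s ds satisfies ‖T f‖_{L^p(ℝ²)} ≲_p ‖f‖_{L^p(ℝ²)}, where the L^p norms are of the associated radial functions on ℝ² (i.e., with measure r dr). -/
open MeasureTheory Set
open scoped ENNReal NNReal

/-- The 2D Lebesgue measure on radial profiles: `r dr` on `(0, ∞)`. -/
noncomputable def radialMeasure : Measure ℝ :=
  (volume.restrict (Set.Ioi (0 : ℝ))).withDensity fun r => ENNReal.ofReal r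

/-! For `p > 1`, Hölder's inequality on `(r, ∞)` against `s⁻¹ ∈ L^q(r, ∞)` gives the pointwise
bound `|T f(r)|^p ≤ (p - 1)^(p - 1) r⁻¹ ∫_r^∞ |f(s)|^p ds`; for `p = 1` it is just `s⁻¹ ≤ r⁻¹`
(and `0 ^ 0 = 1`). Multiplying by `r` and integrating over `r > 0`, Tonelli turns
`∫_0^∞ ∫_r^∞ |f(s)|^p ds dr` into `∫_0^∞ |f(s)|^p s ds`, so `‖T f‖_p ≤ (p - 1)^(1 - 1/p) ‖f‖_p`. -/

lemma lintegral_Ioi_inv_rpow {q : ℝ} (hq : 1 < q) {r : ℝ} (hr : 0 < r) :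
    ∫⁻ s in Ioi r, (ENNReal.ofReal s)⁻¹ ^ q = ENNReal.ofReal (r ^ (1 - q) / (q - 1)) := by
  have hlt : -q < -1 := by linarith
  calc ∫⁻ s in Ioi r, (ENNReal.ofReal s)⁻¹ ^ q
      = ∫⁻ s in Ioi r, ENNReal.ofReal (s ^ (-q)) := by
        refine setLIntegral_congr_fun measurableSet_Ioi fun s hs => ?_
        have hs : 0 < s := hr.trans hs
        rw [← ENNReal.ofReal_inv_of_pos hs, ENNReal.ofReal_rpow_of_pos (inv_pos.2 hs),
          Real.inv_rpow hs.le, Real.rpow_neg hs.le]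
    _ = ENNReal.ofReal (∫ s in Ioi r, s ^ (-q)) := by
        rw [ofReal_integral_eq_lintegral_ofReal (integrableOn_Ioi_rpow_of_lt hlt hr)]
        filter_upwards [ae_restrict_mem measurableSet_Ioi] with s hs
        exact Real.rpow_nonneg (hr.trans hs).le _
    _ = ENNReal.ofReal (r ^ (1 - q) / (q - 1)) := by
        rw [integral_Ioi_rpow_of_lt hlt hr, neg_div, ← div_neg]
        ring_nf

lemma lintegral_Ioi_div_rpow_le {p : ℝ} (hp : 1 ≤ p) {φ : ℝ → ℝ≥0∞} (hφ : AEMeasurable φ)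
    {r : ℝ} (hr : 0 < r) :
    (∫⁻ s in Ioi r, φ s / ENNReal.ofReal s) ^ p
      ≤ ENNReal.ofReal ((p - 1) ^ (p - 1) / r) * ∫⁻ s in Ioi r, φ s ^ p := by
  rcases hp.eq_or_lt with rfl | hp
  · simp only [ENNReal.rpow_one, sub_self, Real.rpow_zero]
    rw [mul_comm, ← lintegral_mul_const' _ _ ENNReal.ofReal_ne_top]
    refine setLIntegral_mono' measurableSet_Ioi fun s hs => ?_
    rw [div_eq_mul_inv, ← ENNReal.ofReal_inv_of_pos (hr.trans hs), ← one_div]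
    gcongr
    exact hs.le
  · set q := p.conjExponent
    have hpq : p.HolderConjugate q := .conjExponent hp
    have hHolder := ENNReal.lintegral_mul_le_Lp_mul_Lq (volume.restrict (Ioi r)) hpq
      (g := fun s => (ENNReal.ofReal s)⁻¹) hφ.restrict ENNReal.measurable_ofReal.inv.aemeasurable
    simp only [Pi.mul_apply, ← div_eq_mul_inv] at hHolder
    rw [lintegral_Ioi_inv_rpow hpq.symm.lt hr] at hHolder
    calc (∫⁻ s in Ioi r, φ s / ENNReal.ofReal s) ^ p
        ≤ ((∫⁻ s in Ioi r, φ s ^ p) ^ (1 / p) *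
            ENNReal.ofReal (r ^ (1 - q) / (q - 1)) ^ (1 / q)) ^ p :=
          ENNReal.rpow_le_rpow hHolder hpq.nonneg
      _ = ENNReal.ofReal ((p - 1) ^ (p - 1) / r) * ∫⁻ s in Ioi r, φ s ^ p := by
        rw [ENNReal.mul_rpow_of_nonneg _ _ hpq.nonneg, ← ENNReal.rpow_mul, ← ENNReal.rpow_mul,
          one_div_mul_cancel hpq.ne_zero, ENNReal.rpow_one, mul_comm,
          ENNReal.ofReal_rpow_of_nonneg (by have := hpq.symm.lt; positivity)
            (mul_nonneg (one_div_nonneg.2 hpq.symm.nonneg) hpq.nonneg)]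
        congr 2
        have hp1 : 0 < p - 1 := by linarith
        have hq : q = p / (p - 1) := rfl
        have h1 : 1 - q = -(p - 1)⁻¹ := by rw [hq]; field_simp; ring
        have h2 : q - 1 = (p - 1)⁻¹ := by rw [hq]; field_simp; ring
        have h3 : 1 / q * p = p - 1 := by rw [hq]; field_simp
        rw [h1, h2, h3, div_inv_eq_mul, Real.mul_rpow (by positivity) hp1.le,
          ← Real.rpow_mul hr.le, neg_mul, inv_mul_cancel₀ hp1.ne', Real.rpow_neg_one,
          inv_mul_eq_div]

lemma lintegral_Ioi_lintegral_Ioi {g : ℝ → ℝ≥0∞} (hg : Measurable g) (a : ℝ) :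
    ∫⁻ r in Ioi a, ∫⁻ s in Ioi r, g s = ∫⁻ s in Ioi a, ENNReal.ofReal (s - a) * g s := by
  have hmeas : Measurable fun x : ℝ × ℝ => (Ioi x.1).indicator g x.2 := by
    have : (fun x : ℝ × ℝ => (Ioi x.1).indicator g x.2)
        = {x : ℝ × ℝ | x.1 < x.2}.indicator (g ∘ Prod.snd) := by
      ext x; simp [indicator_apply]
    rw [this]
    exact (hg.comp measurable_snd).indicator (measurableSet_lt measurable_fst measurable_snd)
  calc ∫⁻ r in Ioi a, ∫⁻ s in Ioi r, g s
      = ∫⁻ r in Ioi a, ∫⁻ s in Ioi a, (Ioi r).indicator g s := by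
        refine setLIntegral_congr_fun measurableSet_Ioi fun r hr => ?_
        rw [lintegral_indicator measurableSet_Ioi, Measure.restrict_restrict measurableSet_Ioi,
          Ioi_inter_Ioi, max_eq_left hr.le]
    _ = ∫⁻ s in Ioi a, ∫⁻ r in Ioi a, (Iio s).indicator (fun _ => g s) r := by
        rw [lintegral_lintegral_swap hmeas.aemeasurable]
        simp only [indicator_apply, mem_Ioi, mem_Iio]
    _ = ∫⁻ s in Ioi a, ENNReal.ofReal (s - a) * g s := by
        refine lintegral_congr fun s => ?_
        rw [lintegral_indicator_const measurableSet_Iio, Measure.restrict_apply measurableSet_Iio,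
          Iio_inter_Ioi, Real.volume_Ioo, mul_comm]

lemma lintegral_radialMeasure (g : ℝ → ℝ≥0∞) :
    ∫⁻ r, g r ∂radialMeasure = ∫⁻ r in Ioi 0, ENNReal.ofReal r * g r :=
  lintegral_withDensity_eq_lintegral_mul_non_measurable _ ENNReal.measurable_ofReal
    (ae_of_all _ fun _ => ENNReal.ofReal_lt_top) g

lemma enorm_neg_integral_Ioi_div_le (f : ℝ → ℝ) {r : ℝ} (hr : 0 < r) :
    ‖-∫ s in Ioi r, f s / s‖ₑ ≤ ∫⁻ s in Ioi r, ‖f s‖ₑ / ENNReal.ofReal s := by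
  rw [enorm_neg]
  refine (enorm_integral_le_lintegral_enorm _).trans_eq ?_
  refine setLIntegral_congr_fun measurableSet_Ioi fun s hs => ?_
  have hs : 0 < s := hr.trans hs
  rw [div_eq_mul_inv, enorm_mul, enorm_inv hs.ne', Real.enorm_eq_ofReal hs.le, ← div_eq_mul_inv]

lemma lintegral_rpow_enorm_neg_integral_Ioi_div_le {p : ℝ} (hp : 1 ≤ p) {f : ℝ → ℝ}
    (hf : Measurable f) :
    ∫⁻ r, ‖-∫ s in Ioi r, f s / s‖ₑ ^ p ∂radialMeasure
      ≤ ENNReal.ofReal ((p - 1) ^ (p - 1)) * ∫⁻ r, ‖f r‖ₑ ^ p ∂radialMeasure := by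
  have hfp : Measurable fun s => ‖f s‖ₑ ^ p := hf.enorm.pow_const p
  rw [lintegral_radialMeasure, lintegral_radialMeasure]
  calc ∫⁻ r in Ioi 0, ENNReal.ofReal r * ‖-∫ s in Ioi r, f s / s‖ₑ ^ p
      ≤ ∫⁻ r in Ioi 0, ENNReal.ofReal r *
          (ENNReal.ofReal ((p - 1) ^ (p - 1) / r) * ∫⁻ s in Ioi r, ‖f s‖ₑ ^ p) := by
        refine setLIntegral_mono' measurableSet_Ioi fun r hr => ?_
        gcongr
        exact (ENNReal.rpow_le_rpow (enorm_neg_integral_Ioi_div_le f hr) (by linarith)).trans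
          (lintegral_Ioi_div_rpow_le hp hf.enorm.aemeasurable hr)
    _ = ∫⁻ r in Ioi 0, ENNReal.ofReal ((p - 1) ^ (p - 1)) * ∫⁻ s in Ioi r, ‖f s‖ₑ ^ p := by
        refine setLIntegral_congr_fun measurableSet_Ioi fun r (hr : 0 < r) => ?_
        rw [← mul_assoc, ← ENNReal.ofReal_mul hr.le, mul_div_cancel₀ _ hr.ne']
    _ = ENNReal.ofReal ((p - 1) ^ (p - 1)) * ∫⁻ s in Ioi 0, ENNReal.ofReal s * ‖f s‖ₑ ^ p := by
        rw [lintegral_const_mul' _ _ ENNReal.ofReal_ne_top, lintegral_Ioi_lintegral_Ioi hfp]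
        simp only [sub_zero]

/-- For `1 ≤ p < ∞`, the operator `T f (r) = -∫_r^∞ f(s)/s ds`
is bounded on `L^p` of radial functions on `ℝ²` (measure `r dr`). -/
theorem lp_bound_r_dr_inv (p : ℝ≥0∞) (hp1 : 1 ≤ p) (hp2 : p ≠ ⊤) :
    ∃ C : ℝ≥0, ∀ f : ℝ → ℝ, Measurable f →
      eLpNorm (fun r => -∫ s in Set.Ioi r, f s / s) p radialMeasure
        ≤ C * eLpNorm f p radialMeasure := by
  have hp0 : p ≠ 0 := (zero_lt_one.trans_le hp1).ne'
  have hpr : 1 ≤ p.toReal := by simpa using ENNReal.toReal_mono hp2 hp1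
  set K := ENNReal.ofReal ((p.toReal - 1) ^ (p.toReal - 1))
  refine ⟨(K ^ (1 / p.toReal)).toNNReal, fun f hf => ?_⟩
  rw [ENNReal.coe_toNNReal (ENNReal.rpow_ne_top_of_nonneg (by positivity) ENNReal.ofReal_ne_top),
    eLpNorm_eq_lintegral_rpow_enorm_toReal hp0 hp2, eLpNorm_eq_lintegral_rpow_enorm_toReal hp0 hp2,
    ← ENNReal.mul_rpow_of_nonneg _ _ (by positivity)]
  exact ENNReal.rpow_le_rpow (lintegral_rpow_enorm_neg_integral_Ioi_div_le hpr hf) (by positivity)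
end

section
/- For m ∈ ℤ₊ and λ > 0, the explicit m-equivariant self-dual soliton φ^{(m)}(x) = √8 λ (m+1) |λx|^m / (1 + |λx|^{2(m+1)}) · e^{imθ} has charge ∫_{ℝ²} |φ^{(m)}|² dx = 8π(m+1), independent of λ. -/
open MeasureTheory Set Real Filter Topology

/-!
Substituting `x = λ r` turns the radial integrand into `4 (m + 1)` times the derivative of
`-(1 + x ^ (2m + 2))⁻¹`, which increases from `-1` at `x = 0` to `0` at infinity; so the radial
integral is `4 (m + 1)` and the charge `2π · 4 (m + 1)`.
-/

theorem hasDerivAt_neg_inv_one_add_pow (k : ℕ) {x : ℝ} (hx : 0 ≤ x) :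
    HasDerivAt (fun x : ℝ => -(1 + x ^ (k + 1))⁻¹)
      ((k + 1) * x ^ k / (1 + x ^ (k + 1)) ^ 2) x := by
  have hpos : 0 < 1 + x ^ (k + 1) := by positivity
  refine (((hasDerivAt_pow (k + 1) x).const_add 1).fun_inv hpos.ne').fun_neg.congr_deriv ?_
  rw [Nat.add_sub_cancel]
  push_cast
  ring

theorem tendsto_neg_inv_one_add_pow_atTop (k : ℕ) :
    Tendsto (fun x : ℝ => -(1 + x ^ (k + 1))⁻¹) atTop (𝓝 0) := by
  have h := (tendsto_atTop_add_const_left atTop 1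
    (tendsto_pow_atTop (α := ℝ) k.succ_ne_zero)).inv_tendsto_atTop.neg
  simpa using h

theorem integral_Ioi_pow_div_one_add_pow_sq (k : ℕ) :
    ∫ x in Ioi (0 : ℝ), (k + 1) * x ^ k / (1 + x ^ (k + 1)) ^ 2 = 1 := by
  rw [integral_Ioi_of_hasDerivAt_of_nonneg'
    (fun x hx => hasDerivAt_neg_inv_one_add_pow k hx)
    (fun x (hx : 0 < x) => by positivity)
    (tendsto_neg_inv_one_add_pow_atTop k)]
  simp

theorem integral_Ioi_mul_pow_div_one_add_pow_sq (k : ℕ) {l : ℝ} (hl : 0 < l) :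
    ∫ r in Ioi (0 : ℝ), l * ((k + 1) * (l * r) ^ k / (1 + (l * r) ^ (k + 1)) ^ 2) = 1 := by
  rw [integral_const_mul,
    integral_comp_mul_left_Ioi (fun x => (k + 1) * x ^ k / (1 + x ^ (k + 1)) ^ 2) 0 hl,
    mul_zero, integral_Ioi_pow_div_one_add_pow_sq, smul_eq_mul, mul_one, mul_inv_cancel₀ hl.ne']

/-- The explicit `m`-equivariant self-dual soliton
`φ^{(m)} = √8 λ(m+1) |λx|^m/(1+|λx|^{2(m+1)}) e^{imθ}` has charge
`∫|φ^{(m)}|² = 2π ∫_0^∞ 8λ²(m+1)² (λr)^{2m} (1+(λr)^{2(m+1)})^{-2} r dr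
 = 8π(m+1)`, independently of `λ > 0`. -/
theorem soliton_charge (m : ℕ) (l : ℝ) (hl : 0 < l) :
    2 * π * ∫ r in Set.Ioi (0 : ℝ),
        8 * l ^ 2 * ((m : ℝ) + 1) ^ 2 * (l * r) ^ (2 * m)
          / (1 + (l * r) ^ (2 * (m + 1))) ^ 2 * r
      = 8 * π * ((m : ℝ) + 1) := by
  have hintegrand : ∀ r : ℝ,
      8 * l ^ 2 * ((m : ℝ) + 1) ^ 2 * (l * r) ^ (2 * m) / (1 + (l * r) ^ (2 * (m + 1))) ^ 2 * r
        = 4 * ((m : ℝ) + 1) * (l * ((((2 * m + 1 : ℕ) : ℝ) + 1) * (l * r) ^ (2 * m + 1)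
          / (1 + (l * r) ^ (2 * m + 1 + 1)) ^ 2)) := by
    intro r
    rw [show 2 * m + 1 + 1 = 2 * (m + 1) by ring]
    push_cast
    ring
  simp_rw [hintegrand]
  rw [integral_const_mul, integral_Ioi_mul_pow_div_one_add_pow_sq _ hl]
  ring
end
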